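/- arXiv:1910.07423 — 2 statements merged into one kernel-verified Lean document; each statement's English description precedes it below -/
import Mathlib

section
/- The function f : ℝ → ℝ defined by f(t) = b₁₁ + (2b₁₂(t+1) + b₂₂ − b₁₁)/((t+1)² + 1) is not convex on ℝ whenever b₁₂ ≠ 0 or b₁₁ ≠ b₂₂. -/
/-!
A convex function bounded above on a real vector space is constant: if `f x < f y`, convexity
forces `f` to grow at least linearly along the ray from `x` through `y`. The function of the
theorem is bounded above, since `|2 b₁₂ s| ≤ |b₁₂| (s² + 1)`, so convexity would make it
constant; comparing its values at `t = -2, -1, 0` gives `b₁₂ = 0` and `b₁₁ = b₂₂`.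
-/

open Set

section BoundedConvex

variable {E : Type*} [AddCommGroup E] [Module ℝ E] {f : E → ℝ}

theorem ConvexOn.add_mul_sub_le_apply_add_smul_sub (hf : ConvexOn ℝ univ f) (x y : E) {t : ℝ}
    (ht : 0 ≤ t) : f y + t * (f y - f x) ≤ f (y + t • (y - x)) := by
  have ht1 : 0 < 1 + t := by linarith
  have hy : (1 / (1 + t)) • (y + t • (y - x)) + (t / (1 + t)) • x = y := by
    rw [← sub_eq_zero]
    match_scalars <;> field_simp <;> ring
  have hconv : f y ≤ (1 / (1 + t)) * f (y + t • (y - x)) + (t / (1 + t)) * f x := by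
    simpa only [hy, smul_eq_mul] using
      hf.2 (mem_univ (y + t • (y - x))) (mem_univ x) (by positivity : 0 ≤ 1 / (1 + t))
        (by positivity : 0 ≤ t / (1 + t)) (by field_simp)
  have key : (1 + t) * f y ≤ f (y + t • (y - x)) + t * f x :=
    calc (1 + t) * f y
        ≤ (1 + t) * ((1 / (1 + t)) * f (y + t • (y - x)) + (t / (1 + t)) * f x) := by gcongr
      _ = f (y + t • (y - x)) + t * f x := by field_simp
  linarith

theorem ConvexOn.le_of_bddAbove (hf : ConvexOn ℝ univ f) (hb : BddAbove (range f)) (x y : E) :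
    f y ≤ f x := by
  by_contra! hlt
  obtain ⟨B, hB⟩ := hb
  have hd : 0 < f y - f x := sub_pos.2 hlt
  set t := (|B - f y| + 1) / (f y - f x)
  have hgrowth : t * (f y - f x) = |B - f y| + 1 := div_mul_cancel₀ _ hd.ne'
  have hext := hf.add_mul_sub_le_apply_add_smul_sub x y (t := t) (by positivity)
  have hbound := hB (mem_range_self (y + t • (y - x)))
  linarith [le_abs_self (B - f y)]

theorem ConvexOn.eq_of_bddAbove (hf : ConvexOn ℝ univ f) (hb : BddAbove (range f)) (x y : E) :
    f x = f y :=
  le_antisymm (hf.le_of_bddAbove hb y x) (hf.le_of_bddAbove hb x y)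

end BoundedConvex

theorem div_sq_add_one_le_abs_add_abs (a c s : ℝ) :
    (2 * a * s + c) / (s ^ 2 + 1) ≤ |a| + |c| := by
  rw [div_le_iff₀ (by positivity)]
  have hs : 2 * a * s ≤ |a| * (s ^ 2 + 1) := by
    have h2s : 2 * |s| ≤ s ^ 2 + 1 := by nlinarith [sq_abs s, sq_nonneg (|s| - 1)]
    calc 2 * a * s ≤ |2 * a * s| := le_abs_self _
      _ = |a| * (2 * |s|) := by rw [abs_mul, abs_mul, abs_two]; ring
      _ ≤ |a| * (s ^ 2 + 1) := mul_le_mul_of_nonneg_left h2s (abs_nonneg a)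
  have hc : c ≤ |c| * (s ^ 2 + 1) := by nlinarith [le_abs_self c, abs_nonneg c, sq_nonneg s]
  linarith

/-- f(t) = b₁₁ + (2b₁₂(t+1) + b₂₂ − b₁₁)/((t+1)² + 1) is not convex on ℝ
whenever b₁₂ ≠ 0 or b₁₁ ≠ b₂₂. -/
theorem stmt_9 (b11 b12 b22 : ℝ) (h : b12 ≠ 0 ∨ b11 ≠ b22) :
    ¬ ConvexOn ℝ Set.univ
      (fun t : ℝ => b11 + (2 * b12 * (t + 1) + b22 - b11) / ((t + 1) ^ 2 + 1)) := by
  intro hc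
  have hb : BddAbove (range
      (fun t : ℝ => b11 + (2 * b12 * (t + 1) + b22 - b11) / ((t + 1) ^ 2 + 1))) := by
    refine ⟨b11 + (|b12| + |b22 - b11|), forall_mem_range.2 fun t => ?_⟩
    have := div_sq_add_one_le_abs_add_abs b12 (b22 - b11) (t + 1)
    rw [add_sub_assoc]
    linarith
  have e1 := hc.eq_of_bddAbove hb (-1) 0
  have e2 := hc.eq_of_bddAbove hb (-1) (-2)
  norm_num at e1 e2
  rcases h with h | h
  · exact h (by linarith)
  · exact h (by linarith)
end

section
/- Let x be a zero-mean random vector in ℝ^d with positive-definite covariance C_x = Q_xᵀQ_x (Cholesky factorization), and t a random vector in ℝ^m with mean b and cross-covariance C_{xt} = E[x(t−b)ᵀ]. Fix an encoder Θ_E ∈ ℝ^{r×d} and let z = Θ_E x. Then the minimum over W ∈ ℝ^{m×r} of E‖t − (Wz + b)‖² equals Tr(C_t) − ‖P_M Q_x^{−T} C_{xt}‖_F², where M = Q_x Θ_Eᵀ and P_M is the orthogonal projection onto the column space of M. -/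
/-!
Write `G = W Θ_E`, `M = Q Θ_Eᵀ`, `N = Q⁻ᵀ C_{xt}` and `A = Q Gᵀ = M Wᵀ`. Expanding the square and
integrating against the second moments turns the risk of `W` into
`Tr C_t - 2 Tr(Aᵀ N) + ‖A‖²_F`. Since `A` lies in the column space of `M`, `Aᵀ P_M = Aᵀ`, so the
risk equals `Tr C_t - ‖P_M N‖²_F + ‖A - P_M N‖²_F`. The last term vanishes for
`Wᵀ = (MᵀM)⁺ Mᵀ N`, which makes `A = P_M N`.
-/

open Matrix
open scoped Classical

/-- Moore–Penrose pseudoinverse, characterized by the four Penrose equations. -/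
noncomputable def pinv {m n : Type*} [Fintype m] [Fintype n] (A : Matrix m n ℝ) : Matrix n m ℝ :=
  if h : ∃ B : Matrix n m ℝ,
      A * B * A = A ∧ B * A * B = B ∧ (A * B)ᵀ = A * B ∧ (B * A)ᵀ = B * A
  then h.choose else 0

/-- Squared Frobenius norm. -/
noncomputable def frobSq {m n : Type*} [Fintype m] [Fintype n] (A : Matrix m n ℝ) : ℝ :=
  (Aᵀ * A).trace

/-- Orthogonal projection onto the column space of M. -/
noncomputable def proj {n r : ℕ} (M : Matrix (Fin n) (Fin r) ℝ) :
    Matrix (Fin n) (Fin n) ℝ :=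
  M * pinv (Mᵀ * M) * Mᵀ

open MeasureTheory

def IsPenroseInverse {m n : Type*} [Fintype m] [Fintype n] (A : Matrix m n ℝ)
    (B : Matrix n m ℝ) : Prop :=
  A * B * A = A ∧ B * A * B = B ∧ (A * B)ᵀ = A * B ∧ (B * A)ᵀ = B * A

section PenroseInverse

variable {n : Type*} [Fintype n] {S : Matrix n n ℝ}

/-- For symmetric `S`, the functional calculus of `x ↦ x⁻¹` (with `0⁻¹ = 0`) is a Penrose inverse:
every Penrose equation becomes an identity between real functions evaluated at `S`. -/
theorem exists_isPenroseInverse_of_isSymm (hS : S.IsSymm) : ∃ B, IsPenroseInverse S B := by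
  have hS' : IsSelfAdjoint S := isHermitian_iff_isSymm.mpr hS
  have cfc_mul_cfc (f g : ℝ → ℝ) : cfc f S * cfc g S = cfc (fun x => f x * g x) S :=
    (cfc_mul f g S (S.finite_spectrum.continuousOn f) (S.finite_spectrum.continuousOn g)).symm
  have transpose_cfc (f : ℝ → ℝ) : (cfc f S)ᵀ = cfc f S :=
    isHermitian_iff_isSymm.mp (cfc_predicate f S)
  have inv_mul_inv (x : ℝ) : x⁻¹ * x * x⁻¹ = x⁻¹ := by simpa using mul_inv_mul_cancel x⁻¹
  rw [← cfc_id' ℝ S]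
  refine ⟨cfc (fun x : ℝ => x⁻¹) S, ?_, ?_, ?_, ?_⟩ <;>
    simp only [cfc_mul_cfc, transpose_cfc, mul_inv_mul_cancel, inv_mul_inv]

theorem isPenroseInverse_pinv_of_isSymm (hS : S.IsSymm) : IsPenroseInverse S (pinv S) := by
  unfold pinv
  split_ifs with h
  · exact h.choose_spec
  · exact absurd (exists_isPenroseInverse_of_isSymm hS) h

end PenroseInverse

theorem transpose_mul_proj {n r : ℕ} (M : Matrix (Fin n) (Fin r) ℝ) : Mᵀ * proj M = Mᵀ := by
  set S := Mᵀ * M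
  have hS : S.IsSymm := by rw [IsSymm, transpose_mul, transpose_transpose]
  have hSBS := (isPenroseInverse_pinv_of_isSymm hS).1
  -- `X (Mᵀ M) = 0` forces `X Mᵀ = 0`; here `X = S S⁺ - 1`.
  have h : (S * pinv S - 1) * (Mᵀ * (Mᵀ)ᴴ) = 0 := by
    rw [conjTranspose_eq_transpose_of_trivial, transpose_transpose, Matrix.sub_mul, hSBS,
      Matrix.one_mul, sub_self]
  rw [mul_self_mul_conjTranspose_eq_zero, Matrix.sub_mul, Matrix.one_mul, sub_eq_zero] at h
  simpa only [proj, S, Matrix.mul_assoc] using h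

section Frobenius

variable {m n : Type*} [Fintype m] [Fintype n]

theorem frobSq_nonneg (A : Matrix m n ℝ) : 0 ≤ frobSq A :=
  (posSemidef_conjTranspose_mul_self A).trace_nonneg

@[simp]
theorem frobSq_zero : frobSq (0 : Matrix m n ℝ) = 0 := by
  simp [frobSq]

theorem frobSq_sub_mul_of_transpose_mul_eq {A : Matrix m n ℝ} {P : Matrix m m ℝ}
    (hAP : Aᵀ * P = Aᵀ) (N : Matrix m n ℝ) :
    frobSq (A - P * N) = frobSq A - 2 * (Aᵀ * N).trace + frobSq (P * N) := by
  have hAPN : Aᵀ * (P * N) = Aᵀ * N := by rw [← Matrix.mul_assoc, hAP]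
  have cross : ((P * N)ᵀ * A).trace = (Aᵀ * N).trace := by
    rw [← trace_transpose, transpose_mul, transpose_transpose, hAPN]
  simp only [frobSq, transpose_sub, Matrix.sub_mul, Matrix.mul_sub, trace_sub, cross, hAPN]
  ring

end Frobenius

theorem mulVec_dotProduct_mulVec_eq_sum {ι κ ν : Type*} [Fintype ι] [Fintype κ] [Fintype ν]
    (A : Matrix ι κ ℝ) (B : Matrix ι ν ℝ) (y : κ → ℝ) (z : ν → ℝ) :
    (A *ᵥ y) ⬝ᵥ (B *ᵥ z) = ∑ j, ∑ k, (Aᵀ * B) j k * (y j * z k) := by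
  rw [dotProduct_mulVec, ← vecMul_transpose, vecMul_vecMul, dotProduct, Finset.sum_comm]
  simp only [vecMul, dotProduct, Finset.sum_mul]
  exact Finset.sum_congr rfl fun j _ => Finset.sum_congr rfl fun k _ => by ring

section SecondMoment

variable {Ω : Type*} [MeasurableSpace Ω] {μ : Measure Ω}
  {ι κ ν : Type*} [Fintype ι] [Fintype κ] [Fintype ν] {y : Ω → κ → ℝ} {z : Ω → ν → ℝ}

theorem integrable_mulVec_dotProduct_mulVec
    (hyz : ∀ j k, Integrable (fun ω => y ω j * z ω k) μ) (A : Matrix ι κ ℝ)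
    (B : Matrix ι ν ℝ) : Integrable (fun ω => (A *ᵥ y ω) ⬝ᵥ (B *ᵥ z ω)) μ := by
  simp only [mulVec_dotProduct_mulVec_eq_sum]
  exact integrable_finsetSum _ fun j _ => integrable_finsetSum _ fun k _ =>
    (hyz j k).const_mul _

theorem integral_mulVec_dotProduct_mulVec
    (hyz : ∀ j k, Integrable (fun ω => y ω j * z ω k) μ) {C : Matrix κ ν ℝ}
    (hC : ∀ j k, C j k = ∫ ω, y ω j * z ω k ∂μ) (A : Matrix ι κ ℝ) (B : Matrix ι ν ℝ) :
    ∫ ω, (A *ᵥ y ω) ⬝ᵥ (B *ᵥ z ω) ∂μ = (A * C * Bᵀ).trace := by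
  simp only [mulVec_dotProduct_mulVec_eq_sum]
  have hint (j : κ) (k : ν) :
      Integrable (fun ω => (Aᵀ * B) j k * (y ω j * z ω k)) μ := (hyz j k).const_mul _
  rw [integral_finsetSum _ fun j _ => integrable_finsetSum _ fun k _ => hint j k]
  simp only [integral_finsetSum _ fun k _ => hint _ k, integral_const_mul, ← hC]
  rw [trace_mul_comm, ← Matrix.mul_assoc, trace, Finset.sum_comm]
  simp only [diag, mul_apply, transpose_apply, mul_comm (A _ _)]

theorem integral_sum_sq_sub_mulVec_add {x : Ω → κ → ℝ} {t : Ω → ι → ℝ} {b : ι → ℝ}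
    (hxx : ∀ i j, Integrable (fun ω => x ω i * x ω j) μ)
    (htt : ∀ i j, Integrable (fun ω => (t ω i - b i) * (t ω j - b j)) μ)
    (hxt : ∀ i j, Integrable (fun ω => x ω i * (t ω j - b j)) μ)
    {Cx : Matrix κ κ ℝ} (hCx : ∀ i j, Cx i j = ∫ ω, x ω i * x ω j ∂μ)
    {Ct : Matrix ι ι ℝ} (hCt : ∀ i j, Ct i j = ∫ ω, (t ω i - b i) * (t ω j - b j) ∂μ)
    {Cxt : Matrix κ ι ℝ} (hCxt : ∀ i j, Cxt i j = ∫ ω, x ω i * (t ω j - b j) ∂μ)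
    (G : Matrix ι κ ℝ) :
    ∫ ω, ∑ i, (t ω i - ((G *ᵥ x ω) i + b i)) ^ 2 ∂μ
      = Ct.trace - 2 * (G * Cxt).trace + (G * Cx * Gᵀ).trace := by
  set u : Ω → ι → ℝ := fun ω => t ω - b
  have expand (ω : Ω) : ∑ i, (t ω i - ((G *ᵥ x ω) i + b i)) ^ 2
      = ((1 : Matrix ι ι ℝ) *ᵥ u ω) ⬝ᵥ (1 *ᵥ u ω) - 2 * (G *ᵥ x ω) ⬝ᵥ (1 *ᵥ u ω)
        + (G *ᵥ x ω) ⬝ᵥ (G *ᵥ x ω) := by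
    simp only [one_mulVec, dotProduct, u, Pi.sub_apply, Finset.mul_sum,
      ← Finset.sum_sub_distrib, ← Finset.sum_add_distrib]
    exact Finset.sum_congr rfl fun i _ => by ring
  have Iuu := integrable_mulVec_dotProduct_mulVec (y := u) (z := u) htt (1 : Matrix ι ι ℝ) 1
  have Ixu := integrable_mulVec_dotProduct_mulVec (y := x) (z := u) hxt G 1
  have Ixx := integrable_mulVec_dotProduct_mulVec hxx G G
  simp_rw [expand]
  rw [integral_add (by exact Iuu.sub (Ixu.const_mul 2)) Ixx,
    integral_sub Iuu (Ixu.const_mul 2), integral_const_mul,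
    integral_mulVec_dotProduct_mulVec (y := u) (z := u) htt hCt,
    integral_mulVec_dotProduct_mulVec (y := x) (z := u) hxt hCxt,
    integral_mulVec_dotProduct_mulVec hxx hCx]
  simp only [one_mul, transpose_one, mul_one]

end SecondMoment

theorem stmt_11_general {Ω : Type*} [MeasurableSpace Ω] (μ : Measure Ω)
    {d m r : ℕ} (x : Ω → Fin d → ℝ) (t : Ω → Fin m → ℝ) (b : Fin m → ℝ)
    (hxx : ∀ i j, Integrable (fun ω => x ω i * x ω j) μ)
    (htt : ∀ i j, Integrable (fun ω => (t ω i - b i) * (t ω j - b j)) μ)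
    (hxt : ∀ i j, Integrable (fun ω => x ω i * (t ω j - b j)) μ)
    (Cx : Matrix (Fin d) (Fin d) ℝ) (hCx : ∀ i j, Cx i j = ∫ ω, x ω i * x ω j ∂μ)
    (Ct : Matrix (Fin m) (Fin m) ℝ)
    (hCt : ∀ i j, Ct i j = ∫ ω, (t ω i - b i) * (t ω j - b j) ∂μ)
    (Cxt : Matrix (Fin d) (Fin m) ℝ)
    (hCxt : ∀ i j, Cxt i j = ∫ ω, x ω i * (t ω j - b j) ∂μ)
    (Q : Matrix (Fin d) (Fin d) ℝ) (hQ : Cx = Qᵀ * Q) (hQu : IsUnit Q.det)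
    (ΘE : Matrix (Fin r) (Fin d) ℝ) :
    IsLeast {e : ℝ | ∃ W : Matrix (Fin m) (Fin r) ℝ,
        e = ∫ ω, ∑ i, (t ω i - ((W *ᵥ (ΘE *ᵥ x ω)) i + b i)) ^ 2 ∂μ}
      (Ct.trace - frobSq (proj (Q * ΘEᵀ) * (Qᵀ)⁻¹ * Cxt)) := by
  set M := Q * ΘEᵀ
  rw [Matrix.mul_assoc (proj M)]
  set N := (Qᵀ)⁻¹ * Cxt
  have hQT : Qᵀ * (Qᵀ)⁻¹ = 1 := mul_nonsing_inv _ (by rwa [det_transpose])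
  have error_eq (W : Matrix (Fin m) (Fin r) ℝ) :
      ∫ ω, ∑ i, (t ω i - ((W *ᵥ (ΘE *ᵥ x ω)) i + b i)) ^ 2 ∂μ
        = Ct.trace - frobSq (proj M * N) + frobSq (M * Wᵀ - proj M * N) := by
    have hproj : (M * Wᵀ)ᵀ * proj M = (M * Wᵀ)ᵀ := by
      rw [transpose_mul, Matrix.mul_assoc, transpose_mul_proj]
    have hsq : frobSq (M * Wᵀ) = (W * ΘE * Cx * (W * ΘE)ᵀ).trace := by
      simp only [frobSq, M, hQ, transpose_mul, transpose_transpose, Matrix.mul_assoc]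
    have hcross : (M * Wᵀ)ᵀ * N = W * ΘE * Cxt := by
      simp only [M, N, transpose_mul, transpose_transpose, Matrix.mul_assoc]
      rw [← Matrix.mul_assoc Qᵀ, hQT, Matrix.one_mul]
    simp_rw [mulVec_mulVec]
    rw [integral_sum_sq_sub_mulVec_add hxx htt hxt hCx hCt hCxt,
      frobSq_sub_mul_of_transpose_mul_eq hproj, hsq, hcross]
    ring
  refine ⟨⟨(pinv (Mᵀ * M) * Mᵀ * N)ᵀ, ?_⟩, ?_⟩
  · rw [error_eq, transpose_transpose, proj]
    simp only [Matrix.mul_assoc, sub_self, frobSq_zero, add_zero]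
  · rintro _ ⟨W, rfl⟩
    rw [error_eq]
    linarith [frobSq_nonneg (M * Wᵀ - proj M * N)]

/-- Minimum MSE of a linear regressor on the encoded data z = Θ_E x:
min over W of E‖t − (Wz + b)‖² = Tr(C_t) − ‖P_M Q⁻ᵀ C_{xt}‖_F², M = QΘ_Eᵀ. -/
theorem stmt_11 {Ω : Type*} [MeasurableSpace Ω] (μ : Measure Ω) [IsProbabilityMeasure μ]
    {d m r : ℕ} (x : Ω → Fin d → ℝ) (t : Ω → Fin m → ℝ) (b : Fin m → ℝ)
    (hxx : ∀ i j, Integrable (fun ω => x ω i * x ω j) μ)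
    (htt : ∀ i j, Integrable (fun ω => (t ω i - b i) * (t ω j - b j)) μ)
    (hxt : ∀ i j, Integrable (fun ω => x ω i * (t ω j - b j)) μ)
    (hxmean : ∀ i, ∫ ω, x ω i ∂μ = 0)
    (htmean : ∀ i, ∫ ω, t ω i ∂μ = b i)
    (Cx : Matrix (Fin d) (Fin d) ℝ) (hCx : ∀ i j, Cx i j = ∫ ω, x ω i * x ω j ∂μ)
    (Ct : Matrix (Fin m) (Fin m) ℝ)
    (hCt : ∀ i j, Ct i j = ∫ ω, (t ω i - b i) * (t ω j - b j) ∂μ)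
    (Cxt : Matrix (Fin d) (Fin m) ℝ)
    (hCxt : ∀ i j, Cxt i j = ∫ ω, x ω i * (t ω j - b j) ∂μ)
    (Q : Matrix (Fin d) (Fin d) ℝ) (hQ : Cx = Qᵀ * Q) (hQu : IsUnit Q.det)
    (hCxpd : Cx.PosDef)
    (ΘE : Matrix (Fin r) (Fin d) ℝ) :
    IsLeast {e : ℝ | ∃ W : Matrix (Fin m) (Fin r) ℝ,
        e = ∫ ω, ∑ i, (t ω i - ((W *ᵥ (ΘE *ᵥ x ω)) i + b i)) ^ 2 ∂μ}
      (Ct.trace - frobSq (proj (Q * ΘEᵀ) * (Qᵀ)⁻¹ * Cxt)) :=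
  stmt_11_general μ x t b hxx htt hxt Cx hCx Ct hCt Cxt hCxt Q hQ hQu ΘE
end
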